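/- Let L be a Lindblad generator on M_d(ℂ). If L admits two distinct stationary density matrices ρ ≠ σ, then L admits two mutually orthogonal stationary density matrices, i.e., stationary density matrices ρ', σ' with ρ'σ' = 0. -/

import Mathlib

open Matrix Filter
open scoped ComplexOrder

variable {d : ℕ}

/-- The Lindblad generator built from `H` and Kraus operators `h`. -/
noncomputable def lindbladOf (H : Matrix (Fin d) (Fin d) ℂ) {n : ℕ}
    (h : Fin n → Matrix (Fin d) (Fin d) ℂ) :
    Matrix (Fin d) (Fin d) ℂ →ₗ[ℂ] Matrix (Fin d) (Fin d) ℂ :=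
  (-Complex.I) • (LinearMap.mulLeft ℂ H - LinearMap.mulRight ℂ H) +
    ∑ α, ((LinearMap.mulLeft ℂ (h α)).comp (LinearMap.mulRight ℂ (h α)ᴴ)
      - ((1 : ℂ)/2) • (LinearMap.mulLeft ℂ ((h α)ᴴ * h α) + LinearMap.mulRight ℂ ((h α)ᴴ * h α)))

/-- `L` is a Lindblad generator. -/
def IsLindblad (L : Matrix (Fin d) (Fin d) ℂ →ₗ[ℂ] Matrix (Fin d) (Fin d) ℂ) : Prop :=
  ∃ (H : Matrix (Fin d) (Fin d) ℂ) (n : ℕ) (h : Fin n → Matrix (Fin d) (Fin d) ℂ),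
    H.IsHermitian ∧ L = lindbladOf H h

/-- `ρ` is a stationary density matrix of `L`. -/
def IsStationaryState (L : Matrix (Fin d) (Fin d) ℂ →ₗ[ℂ] Matrix (Fin d) (Fin d) ℂ)
    (ρ : Matrix (Fin d) (Fin d) ℂ) : Prop :=
  ρ.PosSemidef ∧ ρ.trace = 1 ∧ L ρ = 0

/-!
If `ρ ≠ σ` are stationary, `Δ = ρ - σ` is a nonzero traceless Hermitian matrix with `L Δ = 0`, so
its positive and negative parts `Δ⁺`, `Δ⁻` are nonzero, positive and orthogonal, and after
normalisation they are the required states once we know `L Δ⁺ = 0`.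

For small `s > 0` the resolvent `(1 - s L)⁻¹` is positive: if `X` is Hermitian but not positive,
then at a unit eigenvector `v` for its least eigenvalue `e < 0` the Lindblad form gives
`⟨v, L X v⟩ ≥ e ⟨v, L 1 v⟩`, whence `⟨v, (X - s L X) v⟩ ≤ e (1 - s ⟨v, L 1 v⟩) < 0`.
The resolvent is also trace preserving and fixes `Δ`. Finally, a positive trace-preserving map `Φ`
fixing `Δ` fixes `Δ⁺`: `Φ Δ⁺` is positive, dominates `Φ Δ = Δ` and has the trace of `Δ⁺`, and in the
eigenbasis of `Δ` one sees that `Δ⁺` is the only matrix with these three properties.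
-/

open scoped MatrixOrder

namespace Matrix

variable {n 𝕜 : Type*} [Fintype n]

lemma injective_of_nonneg_of_map_nonneg (T : Matrix n n ℂ →ₗ[ℂ] Matrix n n ℂ)
    (hT_star : ∀ X, T Xᴴ = (T X)ᴴ) (hT : ∀ X, X.IsHermitian → 0 ≤ T X → 0 ≤ X) :
    Function.Injective T := by
  have hker_herm : ∀ Z, Z.IsHermitian → T Z = 0 → Z = 0 := fun Z hZ hTZ =>
    le_antisymm (neg_nonneg.1 (hT (-Z) hZ.neg (by rw [map_neg, hTZ, neg_zero])))
      (hT Z hZ (by rw [hTZ]))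
  refine (injective_iff_map_eq_zero T).2 fun Z hTZ => ?_
  have hsym : ∀ W, T W = 0 → W + Wᴴ = 0 := fun W hW =>
    hker_herm _ (isHermitian_add_transpose_self W)
      (by rw [map_add, hT_star, hW, conjTranspose_zero, add_zero])
  have h1 := hsym Z hTZ
  have h2 := hsym (Complex.I • Z) (by rw [map_smul, hTZ, smul_zero])
  have h3 : (2 : ℂ) • Z = (Z + Zᴴ) - Complex.I • (Complex.I • Z + (Complex.I • Z)ᴴ) := by
    simp only [conjTranspose_smul, Complex.star_def, Complex.conj_I, smul_add, smul_smul,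
      smul_neg, Complex.I_mul_I, neg_smul, one_smul, two_smul]
    abel
  rw [h1, h2, smul_zero, sub_zero] at h3
  exact (smul_eq_zero.1 h3).resolve_left two_ne_zero

variable [RCLike 𝕜] [DecidableEq n]

lemma PosSemidef.apply_eq_zero_of_apply_self_eq_zero {A : Matrix n n 𝕜} (hA : A.PosSemidef)
    {i : n} (hi : A i i = 0) (j : n) : A j i = 0 := by
  have h0 : star (Pi.single i 1) ⬝ᵥ A *ᵥ Pi.single i (1 : 𝕜) = 0 := by simp [hi]
  simpa [mulVec_single_one] using congrFun ((hA.dotProduct_mulVec_zero_iff _).1 h0) j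

lemma eq_diagonal_posPart_of_le {A : Matrix n n 𝕜} (e : n → ℝ) (hA : 0 ≤ A)
    (heA : diagonal (fun i => (e i : 𝕜)) ≤ A) (htr : A.trace = ∑ i, (((e i)⁺ : ℝ) : 𝕜)) :
    A = diagonal (fun i => (((e i)⁺ : ℝ) : 𝕜)) := by
  rw [nonneg_iff_posSemidef] at hA
  rw [le_iff] at heA
  have hdiag : ∀ i, A i i = ((e i)⁺ : ℝ) := by
    have hle : ∀ i, (((e i)⁺ : ℝ) : 𝕜) ≤ A i i := fun i => by
      have h2 := heA.diag_nonneg (i := i)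
      simp only [sub_apply, diagonal_apply_eq, sub_nonneg] at h2
      obtain ⟨r, hr, hrA⟩ := RCLike.nonneg_iff_exists_ofReal.1 (hA.diag_nonneg (i := i))
      rw [← hrA, RCLike.ofReal_le_ofReal] at h2 ⊢
      exact sup_le h2 hr
    have hsum : ∑ i, (A i i - (((e i)⁺ : ℝ) : 𝕜)) = 0 := by
      rw [Finset.sum_sub_distrib, ← htr]
      exact sub_self _
    intro i
    exact sub_eq_zero.1 <| (Finset.sum_eq_zero_iff_of_nonneg fun j _ => sub_nonneg.2 (hle j)).1
      hsum i (Finset.mem_univ _)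
  -- Column `i` vanishes in `A` if `e i ≤ 0`, and in `A - diagonal e` otherwise.
  ext j i
  rcases le_or_gt (e i) 0 with hei | hei
  · have hpos : (e i)⁺ = 0 := posPart_eq_zero.2 hei
    rw [hA.apply_eq_zero_of_apply_self_eq_zero (by rw [hdiag, hpos, RCLike.ofReal_zero]) j,
      diagonal_apply]
    split_ifs with hji <;> simp [hji, hpos]
  · have hpos : (e i)⁺ = e i := posPart_eq_self.2 hei.le
    have hcol := heA.apply_eq_zero_of_apply_self_eq_zero (i := i) (by simp [hdiag, hpos]) j
    rw [sub_apply, sub_eq_zero] at hcol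
    rw [hcol, diagonal_apply, diagonal_apply]
    split_ifs with hji <;> simp [hji, hpos]

namespace IsHermitian

variable {X : Matrix n n 𝕜}

lemma exists_posSemidef_smul_one_sub (hX : X.IsHermitian) :
    ∃ c : ℝ, ((c : 𝕜) • 1 - X).PosSemidef := by
  obtain ⟨c, hc⟩ := (finite_real_spectrum (A := X)).bddAbove
  have hXc : X ≤ algebraMap ℝ _ c := le_algebraMap_of_spectrum_le fun x hx => hc hx
  rw [le_iff, Algebra.algebraMap_eq_smul_one, RCLike.real_smul_eq_coe_smul (K := 𝕜)] at hXc
  exact ⟨c, hXc⟩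

lemma exists_eigenvector_of_not_posSemidef (hX : X.IsHermitian) (hX' : ¬ X.PosSemidef) :
    ∃ e : ℝ, e < 0 ∧ ∃ v : n → 𝕜, star v ⬝ᵥ v = 1 ∧ X *ᵥ v = (e : 𝕜) • v ∧
      (X - (e : 𝕜) • 1).PosSemidef := by
  simp only [hX.posSemidef_iff_eigenvalues_nonneg, Pi.le_def, not_forall, not_le] at hX'
  obtain ⟨i, hi⟩ := hX'
  obtain ⟨i₀, -, hmin⟩ := Finset.exists_min_image Finset.univ hX.eigenvalues ⟨i, Finset.mem_univ _⟩
  have hXe : algebraMap ℝ _ (hX.eigenvalues i₀) ≤ X := by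
    refine algebraMap_le_of_le_spectrum ?_
    rw [hX.spectrum_real_eq_range_eigenvalues]
    rintro _ ⟨j, rfl⟩
    exact hmin j (Finset.mem_univ _)
  rw [le_iff, Algebra.algebraMap_eq_smul_one, RCLike.real_smul_eq_coe_smul (K := 𝕜)] at hXe
  refine ⟨hX.eigenvalues i₀, (hmin i (Finset.mem_univ _)).trans_lt hi, hX.eigenvectorBasis i₀,
    ?_, ?_, hXe⟩
  · rw [dotProduct_comm, ← EuclideanSpace.inner_eq_star_dotProduct, inner_self_eq_norm_sq_to_K,
      hX.eigenvectorBasis.orthonormal.1 i₀]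
    simp
  · rw [hX.mulVec_eigenvectorBasis]
    ext j
    simp [RCLike.real_smul_eq_coe_mul]

variable {Δ : Matrix n n 𝕜}

lemma posPart_eq_mul_diagonal_mul (hΔ : Δ.IsHermitian) :
    Δ⁺ = (hΔ.eigenvectorUnitary : Matrix n n 𝕜) *
      diagonal (fun i => (((hΔ.eigenvalues i)⁺ : ℝ) : 𝕜)) *
        star (hΔ.eigenvectorUnitary : Matrix n n 𝕜) := by
  rw [CFC.posPart_def, cfcₙ_eq_cfc, hΔ.cfc_eq, IsHermitian.cfc, Unitary.conjStarAlgAut_apply]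
  rfl

lemma eq_posPart_of_le (hΔ : Δ.IsHermitian) {A : Matrix n n 𝕜} (hA : 0 ≤ A) (hΔA : Δ ≤ A)
    (htr : A.trace = Δ⁺.trace) : A = Δ⁺ := by
  set U := (hΔ.eigenvectorUnitary : Matrix n n 𝕜)
  have hUU : star U * U = 1 := Unitary.coe_star_mul_self _
  have hUU' : U * star U = 1 := Unitary.coe_mul_star_self _
  have hconj : ∀ B, U * (star U * B * U) * star U = B := fun B => by
    simp only [← mul_assoc, hUU', one_mul]
    rw [mul_assoc, hUU', mul_one]
  have htrconj : ∀ B, (U * B * star U).trace = B.trace := fun B => by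
    rw [trace_mul_cycle, hUU, one_mul]
  have hΔU : star U * Δ * U = diagonal (fun i => (hΔ.eigenvalues i : 𝕜)) := by
    have := hΔ.conjStarAlgAut_star_eigenvectorUnitary
    rwa [Unitary.conjStarAlgAut_apply, Unitary.coe_star, star_star] at this
  have hA' := eq_diagonal_posPart_of_le hΔ.eigenvalues (star_left_conjugate_nonneg hA U)
    (hΔU ▸ star_left_conjugate_le_conjugate hΔA U) <| by
      rw [← htrconj, hconj, htr, posPart_eq_mul_diagonal_mul, htrconj, trace_diagonal]
  rw [← hconj A, hA', posPart_eq_mul_diagonal_mul]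

lemma posPart_ne_zero (hΔ : Δ.IsHermitian) (hΔ0 : Δ ≠ 0) (htr : Δ.trace = 0) : Δ⁺ ≠ 0 := by
  intro hpos
  have hΔneg : Δ = -Δ⁻ := by
    simpa [hpos] using (CFC.posPart_sub_negPart Δ hΔ).symm
  have hneg : Δ⁻ = 0 := (CFC.negPart_nonneg Δ).posSemidef.trace_eq_zero_iff.1 <| by
    rw [← neg_eq_zero, ← trace_neg, ← hΔneg, htr]
  exact hΔ0 (by rw [hΔneg, hneg, neg_zero])

lemma map_posPart_eq (hΔ : Δ.IsHermitian) (Φ : Matrix n n 𝕜 →ₗ[𝕜] Matrix n n 𝕜)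
    (hΦ : ∀ Y, 0 ≤ Y → 0 ≤ Φ Y) (htr : ∀ Y, (Φ Y).trace = Y.trace) (hΦΔ : Φ Δ = Δ) :
    Φ Δ⁺ = Δ⁺ := by
  have hΦΔ' : Φ Δ⁺ - Δ = Φ Δ⁻ := by
    rw [← sub_sub_cancel Δ⁺ Δ⁻, CFC.posPart_sub_negPart Δ hΔ, map_sub, hΦΔ]
  refine hΔ.eq_posPart_of_le (hΦ _ (CFC.posPart_nonneg Δ)) (sub_nonneg.1 ?_) (htr _)
  rw [hΦΔ']
  exact hΦ _ (CFC.negPart_nonneg Δ)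

end IsHermitian

lemma IsHermitian.map_posPart_eq_of_nonneg_of_map_nonneg {Δ : Matrix n n ℂ} (hΔ : Δ.IsHermitian)
    (T : Matrix n n ℂ →ₗ[ℂ] Matrix n n ℂ) (hT_star : ∀ X, T Xᴴ = (T X)ᴴ)
    (hT : ∀ X, X.IsHermitian → 0 ≤ T X → 0 ≤ X) (htr : ∀ X, (T X).trace = X.trace)
    (hTΔ : T Δ = Δ) : T Δ⁺ = Δ⁺ := by
  have hinj := injective_of_nonneg_of_map_nonneg T hT_star hT
  set Φ : Matrix n n ℂ →ₗ[ℂ] Matrix n n ℂ := (LinearEquiv.ofInjectiveEndo T hinj).symm.toLinearMap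
  have hTΦ : ∀ Y, T (Φ Y) = Y := (LinearEquiv.ofInjectiveEndo T hinj).apply_symm_apply
  have hΦ_herm : ∀ Y, Y.IsHermitian → (Φ Y).IsHermitian := fun Y hY =>
    hinj (by rw [hT_star, hTΦ, hY.eq])
  have hfix : Φ Δ⁺ = Δ⁺ := hΔ.map_posPart_eq Φ
    (fun Y hY => hT _ (hΦ_herm Y hY.posSemidef.isHermitian) (by rwa [hTΦ]))
    (fun Y => by rw [← htr, hTΦ]) (hinj (by rw [hTΦ, hTΔ]))
  nth_rewrite 1 [← hfix]
  exact hTΦ _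

end Matrix

section Lindblad

variable {d n : ℕ} (h : Fin n → Matrix (Fin d) (Fin d) ℂ)

lemma lindbladOf_apply (H X : Matrix (Fin d) (Fin d) ℂ) :
    lindbladOf H h X = (-Complex.I) • (H * X - X * H) +
      ∑ α, (h α * X * (h α)ᴴ - ((1 : ℂ) / 2) • ((h α)ᴴ * h α * X + X * ((h α)ᴴ * h α))) := by
  simp [lindbladOf, LinearMap.sum_apply, mul_assoc]

lemma trace_lindbladOf (H X : Matrix (Fin d) (Fin d) ℂ) : (lindbladOf H h X).trace = 0 := by
  simp only [lindbladOf_apply, trace_add, trace_smul, trace_sub, trace_sum, trace_mul_comm H X,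
    sub_self, smul_zero, zero_add]
  refine Finset.sum_eq_zero fun α _ => ?_
  rw [trace_mul_cycle, trace_mul_comm X]
  ring

lemma conjTranspose_lindbladOf {H : Matrix (Fin d) (Fin d) ℂ} (hH : H.IsHermitian)
    (X : Matrix (Fin d) (Fin d) ℂ) : (lindbladOf H h X)ᴴ = lindbladOf H h Xᴴ := by
  simp only [lindbladOf_apply, conjTranspose_add, conjTranspose_smul, conjTranspose_sub,
    conjTranspose_mul, conjTranspose_sum, conjTranspose_conjTranspose, hH.eq, mul_assoc,
    star_neg, Complex.star_def, Complex.conj_I, map_div₀, map_one, map_ofNat]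
  congr 1
  · rw [neg_neg, ← neg_sub, smul_neg, neg_smul]
  · simp only [add_comm]

lemma dotProduct_lindbladOf_mulVec_nonneg (H : Matrix (Fin d) (Fin d) ℂ)
    {Y : Matrix (Fin d) (Fin d) ℂ} (hY : Y.PosSemidef) {v : Fin d → ℂ} (hv : Y *ᵥ v = 0) :
    0 ≤ star v ⬝ᵥ lindbladOf H h Y *ᵥ v := by
  have hvY : star v ᵥ* Y = 0 := by rw [← hY.1.eq, ← star_mulVec, hv, star_zero]
  simp only [lindbladOf_apply, add_mulVec, sub_mulVec, smul_mulVec, sum_mulVec, ← mulVec_mulVec,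
    hv, dotProduct_add, dotProduct_sub, dotProduct_smul, dotProduct_sum, dotProduct_mulVec _ Y,
    hvY, mulVec_zero, dotProduct_zero, zero_dotProduct, sub_self, smul_zero, zero_add, sub_zero]
  refine Finset.sum_nonneg fun α _ => ?_
  rw [dotProduct_mulVec, ← conjTranspose_conjTranspose (h α), ← star_mulVec,
    conjTranspose_conjTranspose]
  exact hY.dotProduct_mulVec_nonneg _

lemma exists_pos_posSemidef_of_posSemidef_sub_smul_lindbladOf {H : Matrix (Fin d) (Fin d) ℂ}
    (hH : H.IsHermitian) :
    ∃ s : ℝ, 0 < s ∧ ∀ X : Matrix (Fin d) (Fin d) ℂ, X.IsHermitian →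
      (X - (s : ℂ) • lindbladOf H h X).PosSemidef → X.PosSemidef := by
  obtain ⟨c, hc⟩ : ∃ c : ℝ, ((c : ℂ) • 1 - lindbladOf H h 1).PosSemidef :=
    IsHermitian.exists_posSemidef_smul_one_sub <| by
      rw [IsHermitian, conjTranspose_lindbladOf h hH, conjTranspose_one]
  set s := (|c| + 1)⁻¹
  have hs : 0 < s := by positivity
  have hsc : s * c < 1 := by
    rw [inv_mul_lt_one₀ (by positivity)]
    linarith [le_abs_self c]
  refine ⟨s, hs, fun X hX hXs => ?_⟩
  by_contra hX'
  obtain ⟨e, he, v, hvv, hXv, hY⟩ := hX.exists_eigenvector_of_not_posSemidef hX'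
  set Y := X - (e : ℂ) • 1
  have hYv : Y *ᵥ v = 0 := by
    rw [sub_mulVec, hXv, smul_mulVec, one_mulVec]
    exact sub_self _
  have hLX : lindbladOf H h X = lindbladOf H h Y + (e : ℂ) • lindbladOf H h 1 := by
    rw [← map_smul, ← map_add, sub_add_cancel]
  have key := hXs.dotProduct_mulVec_nonneg v
  have hcL := hc.dotProduct_mulVec_nonneg v
  rw [hLX, sub_mulVec, smul_mulVec, add_mulVec, smul_mulVec, hXv, dotProduct_sub, dotProduct_smul,
    dotProduct_smul, dotProduct_add, dotProduct_smul, hvv] at key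
  rw [sub_mulVec, smul_mulVec, one_mulVec, dotProduct_sub, dotProduct_smul, hvv] at hcL
  set a := star v ⬝ᵥ lindbladOf H h Y *ᵥ v
  set b := star v ⬝ᵥ lindbladOf H h 1 *ᵥ v
  have ha : 0 ≤ a := dotProduct_lindbladOf_mulVec_nonneg h H hY hYv
  simp only [Complex.nonneg_iff, smul_eq_mul, Complex.sub_re, Complex.mul_re, Complex.add_re,
    Complex.coe_algebraMap, Complex.ofReal_re, Complex.ofReal_im, mul_one, zero_mul, sub_zero]
    at key hcL ha
  nlinarith [mul_nonneg hs.le ha.1, mul_nonneg (mul_nonneg hs.le (neg_nonneg.2 he.le)) hcL.1,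
    mul_pos_of_neg_of_neg he (sub_neg.2 hsc)]

lemma lindbladOf_posPart_eq_zero {H : Matrix (Fin d) (Fin d) ℂ} (hH : H.IsHermitian)
    {Δ : Matrix (Fin d) (Fin d) ℂ} (hΔ : Δ.IsHermitian) (hLΔ : lindbladOf H h Δ = 0) :
    lindbladOf H h Δ⁺ = 0 := by
  obtain ⟨s, hs, hres⟩ := exists_pos_posSemidef_of_posSemidef_sub_smul_lindbladOf h hH
  have hfix := hΔ.map_posPart_eq_of_nonneg_of_map_nonneg (LinearMap.id - (s : ℂ) • lindbladOf H h)
    (fun X => by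
      simp [conjTranspose_sub, conjTranspose_smul, conjTranspose_lindbladOf h hH])
    (fun X hX hTX => (hres X hX hTX.posSemidef).nonneg)
    (fun X => by simp [trace_sub, trace_smul, trace_lindbladOf])
    (by simp [hLΔ])
  simp only [LinearMap.sub_apply, LinearMap.id_apply, LinearMap.smul_apply, sub_eq_self,
    smul_eq_zero, Complex.ofReal_eq_zero, hs.ne', false_or] at hfix
  exact hfix

lemma isStationaryState_inv_trace_smul {L : Matrix (Fin d) (Fin d) ℂ →ₗ[ℂ] Matrix (Fin d) (Fin d) ℂ}
    {P : Matrix (Fin d) (Fin d) ℂ} (hP : 0 ≤ P) (hP0 : P ≠ 0) (hLP : L P = 0) :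
    IsStationaryState L (P.trace⁻¹ • P) :=
  ⟨hP.posSemidef.smul (inv_nonneg_of_nonneg hP.posSemidef.trace_nonneg),
    by rw [trace_smul, smul_eq_mul, inv_mul_cancel₀ (mt hP.posSemidef.trace_eq_zero_iff.1 hP0)],
    by rw [map_smul, hLP, smul_zero]⟩

end Lindblad

theorem stmt5_general (d : ℕ)
    (L : Matrix (Fin d) (Fin d) ℂ →ₗ[ℂ] Matrix (Fin d) (Fin d) ℂ) (hL : IsLindblad L)
    (ρ σ : Matrix (Fin d) (Fin d) ℂ) (hρ : IsStationaryState L ρ)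
    (hσ : IsStationaryState L σ) (hne : ρ ≠ σ) :
    ∃ ρ' σ' : Matrix (Fin d) (Fin d) ℂ,
      IsStationaryState L ρ' ∧ IsStationaryState L σ' ∧ ρ' * σ' = 0 := by
  obtain ⟨H, n, h, hH, rfl⟩ := hL
  obtain ⟨hρ0, hρ1, hρL⟩ := hρ
  obtain ⟨hσ0, hσ1, hσL⟩ := hσ
  set Δ := ρ - σ
  have hΔ : Δ.IsHermitian := hρ0.isHermitian.sub hσ0.isHermitian
  have hΔ0 : Δ ≠ 0 := sub_ne_zero.2 hne
  have hΔtr : Δ.trace = 0 := by rw [trace_sub, hρ1, hσ1, sub_self]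
  have hLΔ : lindbladOf H h Δ = 0 := by rw [map_sub, hρL, hσL, sub_zero]
  have hLpos := lindbladOf_posPart_eq_zero h hH hΔ hLΔ
  have hLneg : lindbladOf H h Δ⁻ = 0 := by
    rw [← CFC.posPart_neg]
    exact lindbladOf_posPart_eq_zero h hH hΔ.neg (by rw [map_neg, hLΔ, neg_zero])
  have hneg0 : Δ⁻ ≠ 0 := by
    rw [← CFC.posPart_neg]
    exact hΔ.neg.posPart_ne_zero (neg_ne_zero.2 hΔ0) (by rw [trace_neg, hΔtr, neg_zero])
  refine ⟨_, _, isStationaryState_inv_trace_smul (CFC.posPart_nonneg Δ)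
    (hΔ.posPart_ne_zero hΔ0 hΔtr) hLpos, isStationaryState_inv_trace_smul (CFC.negPart_nonneg Δ)
    hneg0 hLneg, ?_⟩
  rw [smul_mul_smul_comm, CFC.posPart_mul_negPart, smul_zero]

theorem stmt5 (d : ℕ) (hd : 1 ≤ d)
    (L : Matrix (Fin d) (Fin d) ℂ →ₗ[ℂ] Matrix (Fin d) (Fin d) ℂ) (hL : IsLindblad L)
    (ρ σ : Matrix (Fin d) (Fin d) ℂ) (hρ : IsStationaryState L ρ)
    (hσ : IsStationaryState L σ) (hne : ρ ≠ σ) :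
    ∃ ρ' σ' : Matrix (Fin d) (Fin d) ℂ,
      IsStationaryState L ρ' ∧ IsStationaryState L σ' ∧ ρ' * σ' = 0 :=
  stmt5_general d L hL ρ σ hρ hσ hne
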